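/- arXiv:1811.08322 — 2 statements merged into one kernel-verified Lean document; each statement's English description precedes it below -/
import Mathlib

section
/- Let G be a strongly connected simple digraph on n vertices and 0 ≤ α < 1. Then n - 1 ≤ μ_α(G) ≤ n(n-1)/2. Moreover, μ_α(G) = n - 1 if and only if G is the complete digraph on n vertices, and μ_α(G) = n(n-1)/2 if and only if G is the directed cycle C_n. -/
open Matrix BigOperators

/-- Spectral radius of a real square matrix: the largest modulus of its complex eigenvalues. -/
noncomputable def specRad {n : ℕ} (M : Matrix (Fin n) (Fin n) ℝ) : ℝ :=
  sSup {r : ℝ | ∃ μ ∈ spectrum ℂ (M.map (fun x => (x : ℂ))), r = ‖μ‖}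

/-- A matrix is irreducible iff its associated digraph is strongly connected. -/
def Irred {n : ℕ} (M : Matrix (Fin n) (Fin n) ℝ) : Prop :=
  ∀ i j : Fin n, Relation.ReflTransGen (fun a b => M a b ≠ 0) i j

/-- A directed walk of length `k` from `i` to `j` in a digraph. -/
def DWalk {n : ℕ} (G : Digraph (Fin n)) (i j : Fin n) (k : ℕ) : Prop :=
  ∃ f : ℕ → Fin n, f 0 = i ∧ f k = j ∧ ∀ l < k, G.Adj (f l) (f (l + 1))

/-- A digraph is strongly connected iff every vertex can reach every vertex. -/
def SConn {n : ℕ} (G : Digraph (Fin n)) : Prop :=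
  ∀ i j : Fin n, ∃ k : ℕ, DWalk G i j k

/-- A simple digraph has no loops. -/
def Loopless {n : ℕ} (G : Digraph (Fin n)) : Prop := ∀ i : Fin n, ¬ G.Adj i i

/-- Directed distance from `i` to `j`. -/
noncomputable def ddist {n : ℕ} (G : Digraph (Fin n)) (i j : Fin n) : ℕ :=
  sInf {k : ℕ | DWalk G i j k}

/-- Transmission of vertex `i`: sum of distances from `i` to all vertices. -/
noncomputable def transm {n : ℕ} (G : Digraph (Fin n)) (i : Fin n) : ℝ :=
  ∑ j : Fin n, (ddist G i j : ℝ)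

/-- The generalized distance matrix `D_α(G) = α·Diag(Tr) + (1-α)·D(G)`. -/
noncomputable def Dalpha {n : ℕ} (α : ℝ) (G : Digraph (Fin n)) : Matrix (Fin n) (Fin n) ℝ :=
  α • Matrix.diagonal (transm G) + (1 - α) • (Matrix.of fun i j => (ddist G i j : ℝ))

/-- The `D_α` spectral radius of a digraph. -/
noncomputable def mualpha {n : ℕ} (α : ℝ) (G : Digraph (Fin n)) : ℝ :=
  specRad (Dalpha α G)

/-- Isomorphism of digraphs on `Fin n`. -/
def IsoD {n : ℕ} (G H : Digraph (Fin n)) : Prop :=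
  ∃ e : Fin n ≃ Fin n, ∀ i j : Fin n, G.Adj i j ↔ H.Adj (e i) (e j)

/-- The digraph `K(n,k,m)`: vertices `0..k-1` form `K↔ₖ`, `k..k+m-1` form `K↔ₘ`,
`k+m..n-1` form `K↔_{n-k-m}`; all arcs present except those from `K↔_{n-k-m}` to `K↔ₘ`. -/
def KD (n k m : ℕ) : Digraph (Fin n) :=
  ⟨fun i j => i ≠ j ∧ ¬(k + m ≤ (i : ℕ) ∧ k ≤ (j : ℕ) ∧ (j : ℕ) < k + m)⟩

/-- A directed walk staying inside a vertex set `A`. -/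
def DWalkIn {n : ℕ} (G : Digraph (Fin n)) (A : Set (Fin n)) (i j : Fin n) (k : ℕ) : Prop :=
  ∃ f : ℕ → Fin n, f 0 = i ∧ f k = j ∧ (∀ l ≤ k, f l ∈ A) ∧ ∀ l < k, G.Adj (f l) (f (l + 1))

/-- The induced subdigraph on `A` is strongly connected. -/
def SCOn {n : ℕ} (G : Digraph (Fin n)) (A : Set (Fin n)) : Prop :=
  ∀ i ∈ A, ∀ j ∈ A, ∃ k : ℕ, DWalkIn G A i j k

/-!
`D_α(G)` is an entrywise nonnegative matrix whose `i`-th row sum is the transmission `Tr(i)`, and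
whose off-diagonal entries are positive because `G` is strongly connected. Hence `μ_α(G)` lies
between the smallest and the largest transmission (Gelfand's formula for the lower bound), and it
equals one of these extremes only when all row sums coincide: otherwise every row sum of
`D_α(G)²`, namely `∑ₗ D_α(G)ᵢₗ Tr(l)`, is strictly on the other side of the square of the extreme.

Every distance from `i` to another vertex is at least `1`, so `Tr(i) ≥ n - 1`, with equality iff
all arcs `i → j` are present. The distances from `i` take every value up to their maximum, so
`d ≤ #{w | dist(i,w) < d}` for each distance `d`; summing and comparing with the number of ordered
pairs gives `Tr(i) ≤ n(n-1)/2`, with equality iff the distances from `i` are pairwise distinct.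
If this happens for every `i`, each vertex has exactly one out-neighbour, the out-neighbour map is
a permutation, and strong connectivity makes it a single `n`-cycle, i.e. `G ≅ C_n`.
-/

attribute [local instance] Matrix.linftyOpNormedRing Matrix.linftyOpNormedAlgebra

open Filter Finset

theorem ofReal_le_spectralRadius_of_pow_le_norm {A : Type*} [NormedRing A] [NormedAlgebra ℂ A]
    [CompleteSpace A] {a : A} {c : ℝ} (hc : 0 ≤ c) (h : ∀ m : ℕ, c ^ m ≤ ‖a ^ m‖) :
    ENNReal.ofReal c ≤ spectralRadius ℂ a := by
  refine ge_of_tendsto (spectrum.pow_nnnorm_pow_one_div_tendsto_nhds_spectralRadius a) ?_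
  filter_upwards [eventually_ne_atTop 0] with m hm
  calc ENNReal.ofReal c = (ENNReal.ofReal c ^ m) ^ (1 / m : ℝ) := by
        rw [one_div, ENNReal.pow_rpow_inv_natCast hm]
    _ ≤ (‖a ^ m‖₊ : ENNReal) ^ (1 / m : ℝ) := by
        gcongr
        rw [← ENNReal.ofReal_pow hc, ← ENNReal.ofReal_coe_nnreal, coe_nnnorm]
        exact ENNReal.ofReal_le_ofReal (h m)

namespace Matrix

variable {n : ℕ} {M : Matrix (Fin n) (Fin n) ℝ}

theorem specRad_eq_sSup_image (M : Matrix (Fin n) (Fin n) ℝ) :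
    specRad M = sSup ((‖·‖) '' spectrum ℂ (M.map Complex.ofReal)) := by
  simp only [specRad, Set.image, eq_comm]

theorem map_ofReal_pow (M : Matrix (Fin n) (Fin n) ℝ) (k : ℕ) :
    (M ^ k).map Complex.ofReal = M.map Complex.ofReal ^ k :=
  Matrix.map_pow M Complex.ofRealHom k

theorem norm_le_specRad {μ : ℂ} (hμ : μ ∈ spectrum ℂ (M.map Complex.ofReal)) :
    ‖μ‖ ≤ specRad M := by
  rw [specRad_eq_sSup_image]
  exact le_csSup ((spectrum.isCompact _).image continuous_norm).bddAbove ⟨μ, hμ, rfl⟩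

theorem coe_sum_nnnorm_map_ofReal (hM : ∀ i j, 0 ≤ M i j) (i : Fin n) :
    ((∑ j, ‖M.map Complex.ofReal i j‖₊ : NNReal) : ℝ) = ∑ j, M i j := by
  push_cast
  exact sum_congr rfl fun j _ => by simp [abs_of_nonneg (hM i j)]

theorem sum_le_norm_map_ofReal (hM : ∀ i j, 0 ≤ M i j) (i : Fin n) :
    ∑ j, M i j ≤ ‖M.map Complex.ofReal‖ := by
  rw [linfty_opNorm_def, ← coe_sum_nnnorm_map_ofReal hM i, NNReal.coe_le_coe]
  exact le_sup (f := fun i => ∑ j, ‖M.map Complex.ofReal i j‖₊) (mem_univ i)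

theorem sum_mul_apply (M N : Matrix (Fin n) (Fin n) ℝ) (i : Fin n) :
    ∑ j, (M * N) i j = ∑ l, M i l * ∑ j, N l j := by
  simp only [mul_apply, mul_sum]
  exact sum_comm

theorem le_sum_pow_apply (hM : ∀ i j, 0 ≤ M i j) {b : ℝ} (hb0 : 0 ≤ b)
    (hb : ∀ i, b ≤ ∑ j, M i j) (k : ℕ) (i : Fin n) : b ^ k ≤ ∑ j, (M ^ k) i j := by
  induction k generalizing i with
  | zero => simp [one_apply]
  | succ k ih =>
    calc b ^ (k + 1) = b * b ^ k := pow_succ' b k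
      _ ≤ (∑ l, M i l) * b ^ k := by gcongr; exact hb i
      _ = ∑ l, M i l * b ^ k := sum_mul _ _ _
      _ ≤ ∑ j, (M ^ (k + 1)) i j := by
          rw [pow_succ', sum_mul_apply]
          gcongr with l
          exacts [hM i l, ih l]

variable [NeZero n]

theorem exists_mem_spectrum_specRad_eq_norm (M : Matrix (Fin n) (Fin n) ℝ) :
    ∃ μ ∈ spectrum ℂ (M.map Complex.ofReal), specRad M = ‖μ‖ := by
  obtain ⟨μ, hμ, h⟩ := ((spectrum.isCompact _).image continuous_norm).sSup_mem
    ((spectrum.nonempty (M.map Complex.ofReal)).image _)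
  exact ⟨μ, hμ, (specRad_eq_sSup_image M).trans h.symm⟩

theorem specRad_nonneg (M : Matrix (Fin n) (Fin n) ℝ) : 0 ≤ specRad M := by
  obtain ⟨μ, -, hμ⟩ := exists_mem_spectrum_specRad_eq_norm M
  exact hμ ▸ norm_nonneg μ

theorem specRad_pow (M : Matrix (Fin n) (Fin n) ℝ) (k : ℕ) :
    specRad (M ^ k) = specRad M ^ k := by
  have hmap := map_ofReal_pow M k
  apply le_antisymm
  · obtain ⟨μ, hμ, hρ⟩ := exists_mem_spectrum_specRad_eq_norm (M ^ k)
    rw [hmap, spectrum.map_pow_of_nonempty (spectrum.nonempty _)] at hμ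
    obtain ⟨ν, hν, rfl⟩ := hμ
    rw [hρ, norm_pow]
    gcongr
    exact norm_le_specRad hν
  · obtain ⟨μ, hμ, hρ⟩ := exists_mem_spectrum_specRad_eq_norm M
    rw [hρ, ← norm_pow]
    exact norm_le_specRad (hmap ▸ spectrum.pow_mem_pow _ k hμ)

theorem norm_map_ofReal_le (hM : ∀ i j, 0 ≤ M i j) {s : ℝ} (hs : ∀ i, ∑ j, M i j ≤ s) :
    ‖M.map Complex.ofReal‖ ≤ s := by
  have hs0 : 0 ≤ s := (sum_nonneg fun j _ => hM 0 j).trans (hs 0)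
  rw [linfty_opNorm_def, ← NNReal.coe_mk s hs0, NNReal.coe_le_coe, Finset.sup_le_iff]
  intro i _
  rw [← NNReal.coe_le_coe, coe_sum_nnnorm_map_ofReal hM i]
  exact hs i

theorem specRad_le_of_sum_le (hM : ∀ i j, 0 ≤ M i j) {s : ℝ} (hs : ∀ i, ∑ j, M i j ≤ s) :
    specRad M ≤ s := by
  obtain ⟨μ, hμ, hρ⟩ := exists_mem_spectrum_specRad_eq_norm M
  have hone : ‖(1 : Matrix (Fin n) (Fin n) ℂ)‖ ≤ 1 := by
    rw [← Matrix.map_one Complex.ofReal Complex.ofReal_zero Complex.ofReal_one]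
    refine norm_map_ofReal_le (fun i j => ?_) fun i => ?_
    · rw [one_apply]
      split_ifs <;> norm_num
    · simp [one_apply]
  calc specRad M = ‖μ‖ := hρ
    _ ≤ ‖M.map Complex.ofReal‖ * ‖(1 : Matrix (Fin n) (Fin n) ℂ)‖ :=
        spectrum.norm_le_norm_mul_of_mem hμ
    _ ≤ s * 1 := mul_le_mul (norm_map_ofReal_le hM hs) hone (norm_nonneg _)
          ((norm_nonneg _).trans (norm_map_ofReal_le hM hs))
    _ = s := mul_one s

theorem le_specRad_of_le_sum (hM : ∀ i j, 0 ≤ M i j) {b : ℝ} (hb : ∀ i, b ≤ ∑ j, M i j) :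
    b ≤ specRad M := by
  obtain hb0 | hb0 := lt_or_ge b 0
  · exact hb0.le.trans (specRad_nonneg M)
  have hpow : ∀ m : ℕ, b ^ m ≤ ‖M.map Complex.ofReal ^ m‖ := fun m => by
    rw [← map_ofReal_pow]
    exact (le_sum_pow_apply hM hb0 hb m 0).trans
      (sum_le_norm_map_ofReal (pow_apply_nonneg hM m) 0)
  have hρ : spectralRadius ℂ (M.map Complex.ofReal) ≤ ENNReal.ofReal (specRad M) :=
    iSup₂_le fun μ hμ => by
      rw [← ENNReal.ofReal_coe_nnreal, coe_nnnorm]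
      exact ENNReal.ofReal_le_ofReal (norm_le_specRad hμ)
  exact (ENNReal.ofReal_le_ofReal_iff (specRad_nonneg M)).mp
    ((ofReal_le_spectralRadius_of_pow_le_norm hb0 hpow).trans hρ)

theorem lt_specRad_of_le_sum (hM : ∀ i j, 0 ≤ M i j) (hpos : ∀ i j, i ≠ j → 0 < M i j)
    {a : ℝ} (ha : 0 < a) (hle : ∀ i, a ≤ ∑ j, M i j) {i₀ : Fin n} (hlt : a < ∑ j, M i₀ j) :
    a < specRad M := by
  have hsq : ∀ i, a ^ 2 < ∑ j, (M ^ 2) i j := by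
    intro i
    have hexcess : M i i₀ * (∑ j, M i₀ j - a) ≤ ∑ l, M i l * (∑ j, M l j - a) :=
      single_le_sum (f := fun l => M i l * (∑ j, M l j - a))
        (fun l _ => mul_nonneg (hM i l) (by linarith [hle l])) (mem_univ i₀)
    have hsplit : ∑ l, M i l * ∑ j, M l j = a * ∑ l, M i l + ∑ l, M i l * (∑ j, M l j - a) := by
      rw [mul_sum, ← sum_add_distrib]
      exact sum_congr rfl fun l _ => by ring
    rw [sq M, sum_mul_apply, hsplit]
    rcases eq_or_ne i i₀ with rfl | hi
    · nlinarith [hM i i]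
    · nlinarith [hpos i i₀ hi, hle i]
  obtain ⟨i, -, hmin⟩ := exists_min_image Finset.univ (fun i => ∑ j, (M ^ 2) i j)
    univ_nonempty
  have hρ := le_specRad_of_le_sum (pow_apply_nonneg hM 2) fun j => hmin j (mem_univ j)
  rw [specRad_pow] at hρ
  exact lt_of_pow_lt_pow_left₀ 2 (specRad_nonneg M) ((hsq i).trans_le hρ)

theorem specRad_lt_of_sum_le (hM : ∀ i j, 0 ≤ M i j) (hpos : ∀ i j, i ≠ j → 0 < M i j)
    {s : ℝ} (hle : ∀ i, ∑ j, M i j ≤ s) {i₀ : Fin n} (hlt : ∑ j, M i₀ j < s) :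
    specRad M < s := by
  have hs : 0 < s := (sum_nonneg fun j _ => hM i₀ j).trans_lt hlt
  have hsq : ∀ i, ∑ j, (M ^ 2) i j < s ^ 2 := by
    intro i
    have hexcess : M i i₀ * (s - ∑ j, M i₀ j) ≤ ∑ l, M i l * (s - ∑ j, M l j) :=
      single_le_sum (f := fun l => M i l * (s - ∑ j, M l j))
        (fun l _ => mul_nonneg (hM i l) (by linarith [hle l])) (mem_univ i₀)
    have hsplit : ∑ l, M i l * ∑ j, M l j = s * ∑ l, M i l - ∑ l, M i l * (s - ∑ j, M l j) := by
      rw [mul_sum, ← sum_sub_distrib]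
      exact sum_congr rfl fun l _ => by ring
    rw [sq M, sum_mul_apply, hsplit]
    rcases eq_or_ne i i₀ with rfl | hi
    · nlinarith [hM i i]
    · nlinarith [hpos i i₀ hi, hle i]
  obtain ⟨i, -, hmax⟩ := exists_max_image Finset.univ (fun i => ∑ j, (M ^ 2) i j)
    univ_nonempty
  have hρ := specRad_le_of_sum_le (pow_apply_nonneg hM 2) fun j => hmax j (mem_univ j)
  rw [specRad_pow] at hρ
  exact lt_of_pow_lt_pow_left₀ 2 hs.le (hρ.trans_lt (hsq i))

theorem specRad_eq_of_sum_eq (hM : ∀ i j, 0 ≤ M i j) {s : ℝ} (hs : ∀ i, ∑ j, M i j = s) :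
    specRad M = s :=
  le_antisymm (specRad_le_of_sum_le hM fun i => (hs i).le)
    (le_specRad_of_le_sum hM fun i => (hs i).ge)

theorem specRad_eq_iff_of_le_sum (hM : ∀ i j, 0 ≤ M i j) (hpos : ∀ i j, i ≠ j → 0 < M i j)
    {a : ℝ} (ha : 0 < a) (hle : ∀ i, a ≤ ∑ j, M i j) :
    specRad M = a ↔ ∀ i, ∑ j, M i j = a := by
  refine ⟨fun h i => ?_, specRad_eq_of_sum_eq hM⟩
  by_contra hne
  exact (lt_specRad_of_le_sum hM hpos ha hle (lt_of_le_of_ne (hle i) (Ne.symm hne))).ne' h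

theorem specRad_eq_iff_of_sum_le (hM : ∀ i j, 0 ≤ M i j) (hpos : ∀ i j, i ≠ j → 0 < M i j)
    {s : ℝ} (hle : ∀ i, ∑ j, M i j ≤ s) :
    specRad M = s ↔ ∀ i, ∑ j, M i j = s := by
  refine ⟨fun h i => ?_, specRad_eq_of_sum_eq hM⟩
  by_contra hne
  exact (specRad_lt_of_sum_le hM hpos hle (lt_of_le_of_ne (hle i) hne)).ne h

end Matrix

namespace DWalk

variable {n : ℕ} {G : Digraph (Fin n)} {i j k : Fin n} {a b : ℕ}

theorem refl (G : Digraph (Fin n)) (i : Fin n) : DWalk G i i 0 :=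
  ⟨fun _ => i, rfl, rfl, fun _ h => absurd h (Nat.not_lt_zero _)⟩

theorem eq_of_zero (h : DWalk G i j 0) : i = j := by
  obtain ⟨f, hf0, hf, -⟩ := h
  rw [← hf0, hf]

theorem append (h₁ : DWalk G i j a) (h₂ : DWalk G j k b) : DWalk G i k (a + b) := by
  obtain ⟨f, hf0, hfa, hf⟩ := h₁
  obtain ⟨g, hg0, hgb, hg⟩ := h₂
  refine ⟨fun l => if l ≤ a then f l else g (l - a), by simp [hf0], ?_, fun l hl => ?_⟩
  · dsimp only
    split_ifs with h
    · obtain rfl : b = 0 := by omega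
      rw [add_zero, hfa, ← hgb, hg0]
    · rwa [Nat.add_sub_cancel_left]
  · dsimp only
    by_cases h₁ : l + 1 ≤ a
    · rw [if_pos h₁, if_pos (by omega)]
      exact hf l (by omega)
    rw [if_neg h₁]
    by_cases h₂ : l ≤ a
    · obtain rfl : l = a := by omega
      rw [if_pos h₂, hfa, ← hg0, Nat.add_sub_cancel_left]
      exact hg 0 (by omega)
    · rw [if_neg h₂, show l + 1 - a = l - a + 1 by omega]
      exact hg _ (by omega)

end DWalk

section Distance

variable {n : ℕ} {G : Digraph (Fin n)}

theorem dWalk_ddist (hsc : SConn G) (i j : Fin n) : DWalk G i j (ddist G i j) :=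
  Nat.sInf_mem (hsc i j)

theorem ddist_le {i j : Fin n} {k : ℕ} (h : DWalk G i j k) : ddist G i j ≤ k :=
  Nat.sInf_le h

theorem ddist_self (G : Digraph (Fin n)) (i : Fin n) : ddist G i i = 0 :=
  Nat.le_zero.mp (ddist_le (DWalk.refl G i))

theorem one_le_ddist (hsc : SConn G) {i j : Fin n} (h : i ≠ j) : 1 ≤ ddist G i j :=
  Nat.one_le_iff_ne_zero.mpr fun h0 => h (DWalk.eq_of_zero (h0 ▸ dWalk_ddist hsc i j))

theorem ddist_eq_one_iff (hG : Loopless G) (hsc : SConn G) {i j : Fin n} :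
    ddist G i j = 1 ↔ G.Adj i j := by
  constructor
  · intro h
    obtain ⟨f, hf0, hf1, hf⟩ := h ▸ dWalk_ddist hsc i j
    simpa [hf0, hf1] using hf 0 one_pos
  · intro h
    have hwalk : DWalk G i j 1 :=
      ⟨fun l => if l = 0 then i else j, rfl, rfl, fun l hl => by simpa [Nat.lt_one_iff.mp hl]⟩
    have hne : i ≠ j := by rintro rfl; exact hG i h
    exact le_antisymm (ddist_le hwalk) (one_le_ddist hsc hne)

theorem ddist_triangle (hsc : SConn G) (i j k : Fin n) :
    ddist G i k ≤ ddist G i j + ddist G j k :=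
  ddist_le ((dWalk_ddist hsc i j).append (dWalk_ddist hsc j k))

theorem exists_ddist_eq (hsc : SConn G) {i j : Fin n} {t : ℕ} (ht : t ≤ ddist G i j) :
    ∃ w, ddist G i w = t := by
  obtain ⟨f, hf0, hfd, hf⟩ := dWalk_ddist hsc i j
  refine ⟨f t, le_antisymm (ddist_le ⟨f, hf0, rfl, fun l hl => hf l (by omega)⟩) ?_⟩
  have hrest : ddist G (f t) j ≤ ddist G i j - t := by
    refine ddist_le ⟨fun l => f (t + l), rfl, ?_, fun l hl => hf (t + l) (by omega)⟩
    show f (t + (ddist G i j - t)) = j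
    rw [Nat.add_sub_cancel' ht, hfd]
  have := ddist_triangle hsc i (f t) j
  omega

theorem exists_adj_of_ne (hG : Loopless G) (hsc : SConn G) {i j : Fin n} (h : i ≠ j) :
    ∃ w, G.Adj i w := by
  obtain ⟨w, hw⟩ := exists_ddist_eq hsc (one_le_ddist hsc h)
  exact ⟨w, (ddist_eq_one_iff hG hsc).mp hw⟩

theorem exists_adj_to_of_ne (hsc : SConn G) {i j : Fin n} (h : i ≠ j) : ∃ w, G.Adj w j := by
  obtain ⟨f, -, hfd, hf⟩ := dWalk_ddist hsc i j
  have hd := one_le_ddist hsc h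
  refine ⟨f (ddist G i j - 1), ?_⟩
  simpa [Nat.sub_add_cancel hd, hfd] using hf (ddist G i j - 1) (by omega)

end Distance

section Cycle

variable {n : ℕ} {G : Digraph (Fin n)}

def cycleDigraph (n : ℕ) : Digraph (Fin n) :=
  Digraph.mk (fun i j => ((j : ℕ) = (i : ℕ) + 1) ∨ ((i : ℕ) = n - 1 ∧ (j : ℕ) = 0))

theorem cycleDigraph_adj_iff {i j : Fin n} : (cycleDigraph n).Adj i j ↔ j = finRotate n i := by
  cases n with
  | zero => exact i.elim0
  | succ m =>
    rw [finRotate_apply, Fin.ext_iff, Fin.val_add_one]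
    show ((j : ℕ) = i + 1 ∨ ((i : ℕ) = m + 1 - 1 ∧ (j : ℕ) = 0)) ↔ _
    have := j.isLt
    split_ifs with h
    · rw [Fin.ext_iff, Fin.val_last] at h
      simp only [h]
      omega
    · rw [Fin.ext_iff, Fin.val_last] at h
      omega

theorem DWalk.eq_iterate {σ : Fin n → Fin n} (hσ : ∀ u v, G.Adj u v ↔ v = σ u) {u v : Fin n}
    {k : ℕ} (h : DWalk G u v k) : v = σ^[k] u := by
  obtain ⟨f, hf0, hfk, hf⟩ := h
  have hiter : ∀ l ≤ k, f l = σ^[l] u := by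
    intro l hl
    induction l with
    | zero => exact hf0
    | succ l ih =>
      rw [(hσ _ _).mp (hf l hl), ih (by omega), Function.iterate_succ_apply']
  rw [← hfk, hiter k le_rfl]

theorem ddist_injective_of_adj_iff (hsc : SConn G) {σ : Fin n → Fin n}
    (hσ : ∀ u v, G.Adj u v ↔ v = σ u) (u : Fin n) : Function.Injective (ddist G u) :=
  fun v w h => by
    rw [(dWalk_ddist hsc u v).eq_iterate hσ, (dWalk_ddist hsc u w).eq_iterate hσ, h]

theorem isoD_cycleDigraph_of_adj_iff (hn : 2 ≤ n) (hG : Loopless G) (hsc : SConn G)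
    {σ : Equiv.Perm (Fin n)} (hσ : ∀ u v, G.Adj u v ↔ v = σ u) : IsoD G (cycleDigraph n) := by
  have hfix : ∀ u, σ u ≠ u := fun u h => hG u ((hσ u u).mpr h.symm)
  have hcycle : σ.IsCycle := by
    refine ⟨⟨0, by omega⟩, hfix _, fun y _ => ?_⟩
    obtain ⟨k, hk⟩ := hsc ⟨0, by omega⟩ y
    exact ⟨k, by rw [zpow_natCast, ← Equiv.Perm.iterate_eq_pow, ← hk.eq_iterate hσ]⟩
  have hsupp : σ.support = univ := by
    ext u
    simpa [Equiv.Perm.mem_support] using hfix u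
  obtain ⟨c, hc⟩ := isConj_iff.mp <| hcycle.isConj (isCycle_finRotate_of_le hn)
    (by rw [hsupp, support_finRotate_of_le hn])
  refine ⟨c, fun u v => ?_⟩
  rw [hσ, cycleDigraph_adj_iff, ← hc]
  simp [Equiv.Perm.mul_apply]

theorem exists_perm_adj_iff (hn : 2 ≤ n) (hG : Loopless G) (hsc : SConn G)
    (hinj : ∀ u, Function.Injective (ddist G u)) :
    ∃ σ : Equiv.Perm (Fin n), ∀ u v, G.Adj u v ↔ v = σ u := by
  have : Nontrivial (Fin n) := Fin.nontrivial_iff_two_le.mpr hn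
  choose σ hσ using fun u => exists_adj_of_ne hG hsc (exists_ne u).choose_spec.symm
  have hadj : ∀ u v, G.Adj u v ↔ v = σ u := fun u v =>
    ⟨fun h => hinj u (((ddist_eq_one_iff hG hsc).mpr h).trans
      ((ddist_eq_one_iff hG hsc).mpr (hσ u)).symm), fun h => h ▸ hσ u⟩
  have hsurj : Function.Surjective σ := fun w => by
    obtain ⟨u, hu⟩ := exists_ne w
    obtain ⟨x, hx⟩ := exists_adj_to_of_ne hsc hu
    exact ⟨x, ((hadj x w).mp hx).symm⟩
  exact ⟨Equiv.ofBijective σ hsurj.bijective_of_finite, hadj⟩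

theorem isoD_cycleDigraph_iff (hn : 2 ≤ n) (hG : Loopless G) (hsc : SConn G) :
    IsoD G (cycleDigraph n) ↔ ∀ u, Function.Injective (ddist G u) := by
  constructor
  · rintro ⟨e, he⟩
    refine ddist_injective_of_adj_iff hsc (σ := fun u => e.symm (finRotate n (e u))) fun u v => ?_
    rw [he, cycleDigraph_adj_iff, Equiv.eq_symm_apply]
  · intro hinj
    obtain ⟨σ, hσ⟩ := exists_perm_adj_iff hn hG hsc hinj
    exact isoD_cycleDigraph_of_adj_iff hn hG hsc hσ

end Cycle

section Counting

variable {ι : Type*} [Fintype ι]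

theorem two_mul_sum_card_filter_lt_add_card [DecidableEq ι] (d : ι → ℕ) :
    2 * ∑ j, #{w | d w < d j} + #{p : ι × ι | p.1 ≠ p.2 ∧ d p.1 = d p.2} =
      Fintype.card ι * (Fintype.card ι - 1) := by
  have hlt : ∑ j, #{w | d w < d j} = ∑ p : ι × ι, if d p.2 < d p.1 then 1 else 0 := by
    simp only [card_filter]
    exact (Fintype.sum_prod_type' _).symm
  have hgt : ∑ j, #{w | d w < d j} = ∑ p : ι × ι, if d p.1 < d p.2 then 1 else 0 :=
    hlt.trans (Fintype.sum_equiv (Equiv.prodComm ι ι) _ _ fun _ => rfl)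
  have hoff : Fintype.card ι * (Fintype.card ι - 1) =
      ∑ p : ι × ι, if p.1 ≠ p.2 then 1 else 0 := by
    rw [Fintype.sum_prod_type]
    simp only [← card_filter, filter_ne, card_erase_of_mem (mem_univ _), card_univ, sum_const,
      smul_eq_mul]
  rw [two_mul]
  nth_rewrite 1 [hlt]
  rw [hgt, card_filter, hoff, ← sum_add_distrib, ← sum_add_distrib]
  refine sum_congr rfl fun p _ => ?_
  split_ifs <;> simp_all <;> omega

variable {d : ι → ℕ}

theorem le_card_filter_lt (hd : ∀ j, ∀ t < d j, ∃ w, d w = t) (j : ι) :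
    d j ≤ #{w | d w < d j} :=
  calc d j = #(range (d j)) := (card_range _).symm
    _ ≤ #(image d {w | d w < d j}) := card_le_card fun t ht => by
        obtain ⟨w, rfl⟩ := hd j t (mem_range.mp ht)
        exact mem_image_of_mem d (by simpa using ht)
    _ ≤ #{w | d w < d j} := card_image_le

theorem card_filter_lt_le (hinj : Function.Injective d) (j : ι) : #{w | d w < d j} ≤ d j :=
  calc #{w | d w < d j} ≤ #(range (d j)) :=
        card_le_card_of_injOn d (fun w hw => by simpa using hw) hinj.injOn
    _ = d j := card_range _

theorem two_mul_sum_le [DecidableEq ι] (hd : ∀ j, ∀ t < d j, ∃ w, d w = t) :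
    2 * ∑ j, d j ≤ Fintype.card ι * (Fintype.card ι - 1) := by
  rw [← two_mul_sum_card_filter_lt_add_card d]
  have := sum_le_sum fun j (_ : j ∈ univ) => le_card_filter_lt hd j
  omega

theorem two_mul_sum_eq_iff [DecidableEq ι] (hd : ∀ j, ∀ t < d j, ∃ w, d w = t) :
    2 * ∑ j, d j = Fintype.card ι * (Fintype.card ι - 1) ↔ Function.Injective d := by
  rw [← two_mul_sum_card_filter_lt_add_card d]
  have hle := sum_le_sum fun j (_ : j ∈ univ) => le_card_filter_lt hd j
  have hties : #{p : ι × ι | p.1 ≠ p.2 ∧ d p.1 = d p.2} = 0 ↔ Function.Injective d := by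
    simp only [card_eq_zero, filter_eq_empty_iff, mem_univ, true_implies, not_and, Prod.forall]
    exact ⟨fun h a b hab => by_contra fun hne => h a b hne hab, fun h a b hne hab => hne (h hab)⟩
  constructor
  · intro h
    exact hties.mp (by omega)
  · intro hinj
    have hge := sum_le_sum fun j (_ : j ∈ univ) => card_filter_lt_le hinj j
    have := hties.mpr hinj
    omega

end Counting

section Transmission

variable {n : ℕ} {G : Digraph (Fin n)}

theorem ite_le_ddist (hsc : SConn G) (i j : Fin n) :
    (if j = i then 0 else 1 : ℝ) ≤ ddist G i j := by
  split_ifs with h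
  · exact Nat.cast_nonneg _
  · exact_mod_cast one_le_ddist hsc (Ne.symm h)

theorem sum_ite_eq_sub_one (i : Fin n) : ∑ j, (if j = i then 0 else 1 : ℝ) = n - 1 := by
  simp [sum_ite, filter_ne', Nat.cast_pred i.pos]

theorem sub_one_le_transm (hsc : SConn G) (i : Fin n) : (n : ℝ) - 1 ≤ transm G i := by
  calc (n : ℝ) - 1 = ∑ j, (if j = i then 0 else 1 : ℝ) := (sum_ite_eq_sub_one i).symm
    _ ≤ transm G i := sum_le_sum fun j _ => ite_le_ddist hsc i j

theorem transm_eq_sub_one_iff (hG : Loopless G) (hsc : SConn G) (i : Fin n) :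
    transm G i = n - 1 ↔ ∀ j, G.Adj i j ↔ i ≠ j := by
  rw [← sum_ite_eq_sub_one i, transm, eq_comm, sum_eq_sum_iff_of_le fun j _ => ite_le_ddist hsc i j]
  refine forall_congr' fun j => ?_
  rcases eq_or_ne j i with rfl | hj
  · simp [ddist_self, hG j]
  · rw [if_neg hj, eq_comm, Nat.cast_eq_one, ddist_eq_one_iff hG hsc]
    simp [Ne.symm hj]

theorem two_mul_transm_eq (G : Digraph (Fin n)) (i : Fin n) :
    2 * transm G i = ((2 * ∑ j, ddist G i j : ℕ) : ℝ) := by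
  simp [transm]

theorem cast_mul_sub_one (n : ℕ) : ((n * (n - 1) : ℕ) : ℝ) = n * (n - 1) := by
  rcases n with _ | n <;> simp

theorem transm_le (hsc : SConn G) (i : Fin n) : transm G i ≤ n * (n - 1) / 2 := by
  have h := two_mul_sum_le fun j t ht => exists_ddist_eq hsc (i := i) (j := j) ht.le
  rw [Fintype.card_fin] at h
  have := two_mul_transm_eq G i
  rw [le_div_iff₀ two_pos, ← cast_mul_sub_one, mul_comm, this]
  exact_mod_cast h

theorem transm_eq_iff_injective (hsc : SConn G) (i : Fin n) :
    transm G i = n * (n - 1) / 2 ↔ Function.Injective (ddist G i) := by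
  rw [← two_mul_sum_eq_iff fun j t ht => exists_ddist_eq hsc (i := i) (j := j) ht.le,
    Fintype.card_fin, eq_div_iff two_ne_zero, mul_comm, two_mul_transm_eq, ← cast_mul_sub_one,
    Nat.cast_inj]

end Transmission

section DistanceMatrix

variable {n : ℕ} {G : Digraph (Fin n)} {α : ℝ}

theorem dalpha_apply (α : ℝ) (G : Digraph (Fin n)) (i j : Fin n) :
    Dalpha α G i j = α * (if i = j then transm G i else 0) + (1 - α) * ddist G i j := by
  simp [Dalpha, diagonal_apply]

theorem transm_nonneg (G : Digraph (Fin n)) (i : Fin n) : 0 ≤ transm G i :=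
  sum_nonneg fun _ _ => Nat.cast_nonneg _

theorem dalpha_nonneg (h0 : 0 ≤ α) (h1 : α ≤ 1) (i j : Fin n) : 0 ≤ Dalpha α G i j := by
  rw [dalpha_apply]
  have := transm_nonneg G i
  have : 0 ≤ 1 - α := by linarith
  split_ifs <;> positivity

theorem dalpha_pos_of_ne (hsc : SConn G) (h1 : α < 1) {i j : Fin n} (h : i ≠ j) :
    0 < Dalpha α G i j := by
  rw [dalpha_apply, if_neg h, mul_zero, zero_add]
  exact mul_pos (by linarith) (by exact_mod_cast one_le_ddist hsc h)

theorem sum_dalpha (α : ℝ) (G : Digraph (Fin n)) (i : Fin n) :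
    ∑ j, Dalpha α G i j = transm G i := by
  simp only [dalpha_apply, sum_add_distrib, ← mul_sum, sum_ite_eq, mem_univ, if_true]
  rw [← transm]
  ring

end DistanceMatrix

theorem stmt7 {n : ℕ} (hn : 2 ≤ n) (G : Digraph (Fin n)) (hG : Loopless G) (hsc : SConn G)
    (α : ℝ) (h0 : 0 ≤ α) (h1 : α < 1) :
    ((n : ℝ) - 1 ≤ mualpha α G ∧ mualpha α G ≤ (n : ℝ) * ((n : ℝ) - 1) / 2) ∧
    (mualpha α G = (n : ℝ) - 1 ↔ ∀ i j : Fin n, G.Adj i j ↔ i ≠ j) ∧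
    (mualpha α G = (n : ℝ) * ((n : ℝ) - 1) / 2 ↔
      IsoD G (Digraph.mk (fun i j =>
        ((j : ℕ) = (i : ℕ) + 1) ∨ ((i : ℕ) = n - 1 ∧ (j : ℕ) = 0)))) := by
  have : NeZero n := ⟨by omega⟩
  have hM : ∀ i j, 0 ≤ Dalpha α G i j := dalpha_nonneg h0 h1.le
  have hpos : ∀ i j, i ≠ j → 0 < Dalpha α G i j := fun _ _ => dalpha_pos_of_ne hsc h1
  have hlow : ∀ i, (n : ℝ) - 1 ≤ ∑ j, Dalpha α G i j := fun i =>
    (sum_dalpha α G i).symm ▸ sub_one_le_transm hsc i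
  have hup : ∀ i, ∑ j, Dalpha α G i j ≤ n * (n - 1) / 2 := fun i =>
    (sum_dalpha α G i).symm ▸ transm_le hsc i
  have hn1 : (0 : ℝ) < n - 1 := by
    rw [sub_pos, Nat.one_lt_cast]
    omega
  refine ⟨⟨le_specRad_of_le_sum hM hlow, specRad_le_of_sum_le hM hup⟩, ?_, ?_⟩
  · rw [mualpha, specRad_eq_iff_of_le_sum hM hpos hn1 hlow]
    simp only [sum_dalpha, transm_eq_sub_one_iff hG hsc]
  · rw [mualpha, specRad_eq_iff_of_sum_le hM hpos hup]
    refine (forall_congr' fun i => ?_).trans (isoD_cycleDigraph_iff hn hG hsc).symm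
    rw [sum_dalpha, transm_eq_iff_injective hsc]
end

section
/- Let 0 < α < 1 and integers 1 ≤ k ≤ n-3 (so n ≥ k+3). Then μ_α(K(n,k,n-k-1)) > μ_α(K(n,k,1)). -/
open Matrix BigOperators

/-!
The distance digraph of `K(n,k,m)` has a hub (any vertex of `K↔ₖ`), so all distances are `0`, `1`
or `2`, and `D_α(K(n,k,m))` maps vectors constant on `{0,…,k+m-1}` and on `{k+m,…,n-1}` to such
vectors. Lifting the positive Perron eigenvector of the `2 × 2` quotient matrix gives a positive
eigenvector of the nonnegative matrix `D_α`, so by the Collatz–Wielandt bound `μ_α(K(n,k,m))` is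
the larger root `ρₘ` of the quotient's characteristic polynomial `pₘ`. Finally
`p_{n-k-1}(y) = p₁(y) + α (n-k-2) (n-1-y)` and `ρ₁ > n - 1`, so `p_{n-k-1}(ρ₁) < 0`, i.e.
`ρ₁ < ρ_{n-k-1}`.
-/

theorem Matrix.mem_spectrum_iff_exists_mulVec_eq_smul {ι K : Type*} [Fintype ι] [DecidableEq ι]
    [Field K] {A : Matrix ι ι K} {μ : K} :
    μ ∈ spectrum K A ↔ ∃ v ≠ 0, A *ᵥ v = μ • v := by
  rw [← Matrix.spectrum_toLin', ← Module.End.hasEigenvalue_iff_mem_spectrum]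
  constructor
  · intro h
    obtain ⟨v, hv, hv0⟩ := h.exists_hasEigenvector
    exact ⟨v, hv0, Module.End.mem_eigenspace_iff.1 hv⟩
  · rintro ⟨v, hv0, hv⟩
    exact Module.End.hasEigenvalue_of_hasEigenvector ⟨Module.End.mem_eigenspace_iff.2 hv, hv0⟩

section PerronFrobenius

variable {N : ℕ} {M : Matrix (Fin N) (Fin N) ℝ} {x : Fin N → ℝ} {r : ℝ}

theorem norm_le_of_mem_spectrum_of_mulVec_le (hM : ∀ i j, 0 ≤ M i j) (hx : ∀ i, 0 < x i)
    (hMx : ∀ i, (M *ᵥ x) i ≤ r * x i) {μ : ℂ} (hμ : μ ∈ spectrum ℂ (M.map (fun x => (x : ℂ)))) :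
    ‖μ‖ ≤ r := by
  obtain ⟨v, hv0, hv⟩ := Matrix.mem_spectrum_iff_exists_mulVec_eq_smul.1 hμ
  obtain ⟨i, -, hi⟩ := Finset.exists_max_image Finset.univ (fun j => ‖v j‖ / x j)
    (Finset.univ_nonempty_iff.2 ⟨(Function.ne_iff.1 hv0).choose⟩)
  set t := ‖v i‖ / x i
  have hvt : ∀ j, ‖v j‖ ≤ t * x j := fun j =>
    (div_le_iff₀ (hx j)).1 (hi j (Finset.mem_univ j))
  have hvi : 0 < ‖v i‖ := by
    obtain ⟨j, hj⟩ := Function.ne_iff.1 hv0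
    have := (div_pos (norm_pos_iff.2 hj) (hx j)).trans_le (hi j (Finset.mem_univ j))
    exact (div_pos_iff_of_pos_right (hx i)).1 this
  have key : ‖μ‖ * ‖v i‖ ≤ r * ‖v i‖ := calc
    ‖μ‖ * ‖v i‖ = ‖∑ j, (M i j : ℂ) * v j‖ := by
      rw [← norm_mul, ← smul_eq_mul, ← Pi.smul_apply, ← hv]; rfl
    _ ≤ ∑ j, M i j * ‖v j‖ := by
      refine (norm_sum_le _ _).trans_eq (Finset.sum_congr rfl fun j _ => ?_)
      rw [norm_mul, Complex.norm_of_nonneg (hM i j)]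
    _ ≤ ∑ j, M i j * (t * x j) :=
      Finset.sum_le_sum fun j _ => mul_le_mul_of_nonneg_left (hvt j) (hM i j)
    _ = t * (M *ᵥ x) i := by
      simp only [Matrix.mulVec, dotProduct, Finset.mul_sum]
      exact Finset.sum_congr rfl fun j _ => by ring
    _ ≤ t * (r * x i) := mul_le_mul_of_nonneg_left (hMx i) (div_nonneg (norm_nonneg _) (hx i).le)
    _ = r * ‖v i‖ := by
      rw [mul_left_comm, div_mul_cancel₀ _ (hx i).ne']
  exact le_of_mul_le_mul_right key hvi

theorem ofReal_mem_spectrum_of_mulVec_eq_smul (hx : x ≠ 0) (hMx : M *ᵥ x = r • x) :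
    (r : ℂ) ∈ spectrum ℂ (M.map (fun x => (x : ℂ))) := by
  refine Matrix.mem_spectrum_iff_exists_mulVec_eq_smul.2 ⟨fun i => x i, ?_, ?_⟩
  · exact fun h => hx (funext fun i => by simpa using congrFun h i)
  · ext i
    have := congrFun hMx i
    simp only [Matrix.mulVec, dotProduct, Matrix.map_apply, Pi.smul_apply, smul_eq_mul] at this ⊢
    exact_mod_cast this

theorem specRad_eq_of_mulVec_eq_smul [NeZero N] (hM : ∀ i j, 0 ≤ M i j) (hx : ∀ i, 0 < x i)
    (hMx : M *ᵥ x = r • x) : specRad M = r := by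
  have hle : ∀ μ ∈ spectrum ℂ (M.map (fun x => (x : ℂ))), ‖μ‖ ≤ r := fun μ =>
    norm_le_of_mem_spectrum_of_mulVec_le hM hx (fun i => (congrFun hMx i).le)
  have hr : (r : ℂ) ∈ spectrum ℂ (M.map (fun x => (x : ℂ))) :=
    ofReal_mem_spectrum_of_mulVec_eq_smul (fun h => (hx 0).ne' (congrFun h 0)) hMx
  have hr0 : 0 ≤ r := (norm_nonneg _).trans (hle _ hr)
  have hbound : ∀ s ∈ {s : ℝ | ∃ μ ∈ spectrum ℂ (M.map (fun x => (x : ℂ))), s = ‖μ‖}, s ≤ r := by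
    rintro _ ⟨μ, hμ, rfl⟩
    exact hle μ hμ
  refine le_antisymm (Real.sSup_le hbound hr0) (le_csSup ⟨r, hbound⟩ ⟨r, hr, ?_⟩)
  rw [Complex.norm_real, Real.norm_of_nonneg hr0]

end PerronFrobenius

/-- The larger eigenvalue of `!![a, b; c, d]`. -/
noncomputable def perronRoot (a b c d : ℝ) : ℝ := (a + d + √((a - d) ^ 2 + 4 * b * c)) / 2

theorem perronRoot_sub_mul_sub {a b c d : ℝ} (hbc : 0 ≤ b * c) :
    (perronRoot a b c d - a) * (perronRoot a b c d - d) = b * c := by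
  have h := Real.sq_sqrt (by nlinarith [sq_nonneg (a - d)] : 0 ≤ (a - d) ^ 2 + 4 * b * c)
  unfold perronRoot
  linear_combination h / 4

theorem lt_perronRoot {a b c d y : ℝ} (hy : (y - a) * (y - d) < b * c) :
    y < perronRoot a b c d := by
  have hdisc : (2 * y - a - d) ^ 2 < (a - d) ^ 2 + 4 * b * c := by nlinarith
  have := Real.lt_sqrt_of_sq_lt hdisc
  unfold perronRoot
  linarith

theorem specRad_eq_perronRoot_of_mulVec_ite {N : ℕ} [NeZero N] {M : Matrix (Fin N) (Fin N) ℝ}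
    (hM : ∀ i j, 0 ≤ M i j) (s : ℕ) {a b c d : ℝ} (hb : 0 < b) (hc : 0 < c)
    (hMs : ∀ x y i, (M *ᵥ fun j => if (j : ℕ) < s then x else y) i =
      if (i : ℕ) < s then a * x + b * y else c * x + d * y) :
    specRad M = perronRoot a b c d := by
  have hρ := perronRoot_sub_mul_sub (a := a) (d := d) (mul_pos hb hc).le
  have hρa : a < perronRoot a b c d := lt_perronRoot (by simpa using mul_pos hb hc)
  refine specRad_eq_of_mulVec_eq_smul hM
    (x := fun j => if (j : ℕ) < s then b else perronRoot a b c d - a)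
    (fun j => by split_ifs <;> linarith) (funext fun i => ?_)
  rw [hMs, Pi.smul_apply, smul_eq_mul]
  split_ifs
  · ring
  · linear_combination -hρ

section Distance

variable {n : ℕ} {G : Digraph (Fin n)} {i j : Fin n}

theorem dWalk_zero_iff : DWalk G i j 0 ↔ i = j :=
  ⟨fun ⟨f, h0, h1, _⟩ => h0 ▸ h1, fun h => ⟨fun _ => j, h ▸ rfl, rfl, by simp⟩⟩

theorem dWalk_one_iff : DWalk G i j 1 ↔ G.Adj i j := by
  refine ⟨fun ⟨f, h0, h1, hf⟩ => h0 ▸ h1 ▸ hf 0 one_pos, fun h => ?_⟩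
  refine ⟨fun l => if l = 0 then i else j, rfl, rfl, fun l hl => ?_⟩
  obtain rfl : l = 0 := by omega
  simpa using h

theorem dWalk_two_of_adj {z : Fin n} (hiz : G.Adj i z) (hzj : G.Adj z j) : DWalk G i j 2 := by
  refine ⟨fun l => if l = 0 then i else if l = 1 then z else j, rfl, rfl, fun l hl => ?_⟩
  interval_cases l <;> simpa

theorem ddist_le_of_dWalk {k : ℕ} (h : DWalk G i j k) : ddist G i j ≤ k := Nat.sInf_le h

theorem dWalk_ddist_s14 {k : ℕ} (h : DWalk G i j k) : DWalk G i j (ddist G i j) :=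
  Nat.sInf_mem (s := {k | DWalk G i j k}) ⟨k, h⟩

theorem ddist_eq_of_hub [DecidableRel G.Adj] {z : Fin n}
    (hz : ∀ v, v ≠ z → G.Adj v z ∧ G.Adj z v) (i j : Fin n) :
    ddist G i j = if i = j then 0 else if G.Adj i j then 1 else 2 := by
  split_ifs with hij hadj
  · exact Nat.le_zero.1 (ddist_le_of_dWalk (dWalk_zero_iff.2 hij))
  · have h1 : DWalk G i j 1 := dWalk_one_iff.2 hadj
    have := dWalk_ddist_s14 h1
    have := ddist_le_of_dWalk h1
    interval_cases h : ddist G i j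
    · exact absurd (dWalk_zero_iff.1 ‹_›) hij
    · rfl
  · have h2 : DWalk G i j 2 := by
      by_cases hiz : i = z
      · exact absurd (hiz ▸ (hz j (hiz ▸ Ne.symm hij)).2) hadj
      by_cases hjz : j = z
      · exact absurd (hjz ▸ (hz i hiz).1) hadj
      exact dWalk_two_of_adj (hz i hiz).1 (hz j hjz).2
    have := dWalk_ddist_s14 h2
    have := ddist_le_of_dWalk h2
    interval_cases h : ddist G i j
    · exact absurd (dWalk_zero_iff.1 ‹_›) hij
    · exact absurd (dWalk_one_iff.1 ‹_›) hadj
    · rfl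

end Distance

section Dalpha

variable {n : ℕ}

theorem Dalpha_mulVec_apply (α : ℝ) (G : Digraph (Fin n)) (x : Fin n → ℝ) (i : Fin n) :
    (Dalpha α G *ᵥ x) i = α * transm G i * x i + (1 - α) * ∑ j, (ddist G i j : ℝ) * x j := by
  rw [Dalpha, Matrix.add_mulVec, Matrix.smul_mulVec, Matrix.smul_mulVec, Pi.add_apply,
    Pi.smul_apply, Pi.smul_apply, smul_eq_mul, smul_eq_mul, Matrix.mulVec_diagonal, mul_assoc]
  rfl

theorem Dalpha_nonneg {α : ℝ} (h0 : 0 ≤ α) (h1 : α ≤ 1) (G : Digraph (Fin n)) (i j : Fin n) :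
    0 ≤ Dalpha α G i j := by
  have htr : 0 ≤ transm G i := Finset.sum_nonneg fun j _ => Nat.cast_nonneg _
  have : 0 ≤ 1 - α := by linarith
  simp only [Dalpha, Matrix.add_apply, Matrix.smul_apply, Matrix.diagonal_apply, Matrix.of_apply,
    smul_eq_mul]
  split_ifs <;> positivity

end Dalpha

/-- The paper's closed form for `μ_α(K(n,k,m))`. -/
noncomputable def perronRootKD (α n k m : ℝ) : ℝ :=
  perronRoot (α * (n - 1) + (1 - α) * (k + m - 1)) ((1 - α) * (n - k - m))
    ((1 - α) * (k + 2 * m)) (α * (n - 1 + m) + (1 - α) * (n - k - m - 1))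

theorem perronRootKD_one_lt {α n k : ℝ} (h0 : 0 < α) (h1 : α < 1) (hk : 1 ≤ k) (hkn : k + 3 ≤ n) :
    perronRootKD α n k 1 < perronRootKD α n k (n - k - 1) := by
  unfold perronRootKD
  have hρ := perronRoot_sub_mul_sub (a := α * (n - 1) + (1 - α) * (k + 1 - 1))
    (b := (1 - α) * (n - k - 1)) (c := (1 - α) * (k + 2 * 1))
    (d := α * (n - 1 + 1) + (1 - α) * (n - k - 1 - 1))
    (mul_nonneg (mul_nonneg (by linarith) (by linarith)) (mul_nonneg (by linarith) (by linarith)))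
  set ρ := perronRoot (α * (n - 1) + (1 - α) * (k + 1 - 1)) ((1 - α) * (n - k - 1))
    ((1 - α) * (k + 2 * 1)) (α * (n - 1 + 1) + (1 - α) * (n - k - 1 - 1))
  have hρn : n - 1 < ρ := lt_perronRoot (by nlinarith)
  refine lt_perronRoot ?_
  nlinarith [mul_pos (mul_pos h0 (by linarith : 0 < n - k - 2)) (sub_pos.2 hρn)]

theorem Fin.sum_ite_val_lt {M : Type*} [AddCommMonoid M] {n c : ℕ} (hc : c ≤ n) (a b : M) :
    ∑ j : Fin n, (if (j : ℕ) < c then a else b) = c • a + (n - c) • b := by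
  rw [Finset.sum_ite, Finset.sum_const, Finset.sum_const, Fin.card_filter_val_lt,
    min_eq_right hc, Finset.filter_not, Finset.card_sdiff_of_subset (Finset.filter_subset _ _),
    Fin.card_filter_val_lt, min_eq_right hc, Finset.card_univ, Fintype.card_fin]

section KD

variable {n k m : ℕ}

theorem KD_adj_of_val_lt {z v : Fin n} (hz : (z : ℕ) < k) (hv : v ≠ z) :
    (KD n k m).Adj v z ∧ (KD n k m).Adj z v :=
  ⟨⟨hv, by omega⟩, ⟨hv.symm, by omega⟩⟩

theorem ddist_KD (hk : 0 < k) (i j : Fin n) :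
    ddist (KD n k m) i j =
      if i = j then 0 else if k + m ≤ (i : ℕ) ∧ k ≤ (j : ℕ) ∧ (j : ℕ) < k + m then 2 else 1 := by
  classical
  rw [ddist_eq_of_hub (z := ⟨0, i.pos⟩) fun v hv => KD_adj_of_val_lt hk hv]
  by_cases hij : i = j
  · simp [hij]
  · simp only [KD, hij, if_false, ne_eq, not_false_eq_true, true_and]
    split_ifs <;> tauto

theorem ddist_KD_mul (hk : 0 < k) (a b : ℝ) (i j : Fin n) :
    (ddist (KD n k m) i j : ℝ) * (if (j : ℕ) < k + m then a else b) =
      (if (j : ℕ) < k + m then a else b) - (if j = i then (if (i : ℕ) < k + m then a else b) else 0)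
        + if k + m ≤ (i : ℕ) then
            (if (j : ℕ) < k + m then a else 0) - (if (j : ℕ) < k then a else 0) else 0 := by
  rw [ddist_KD hk]
  by_cases hji : j = i
  · subst hji
    split_ifs <;> first | omega | simp
  · have hij : i ≠ j := Ne.symm hji
    simp only [hij, hji, if_false]
    split_ifs <;> first | omega | (push_cast; ring)

theorem sum_ddist_KD_mul (hk : 0 < k) (hkm : k + m ≤ n) (a b : ℝ) (i : Fin n) :
    ∑ j, (ddist (KD n k m) i j : ℝ) * (if (j : ℕ) < k + m then a else b) =
      if (i : ℕ) < k + m then (k + m - 1) * a + (n - k - m) * b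
      else (k + 2 * m) * a + (n - k - m - 1) * b := by
  simp only [ddist_KD_mul hk, Finset.sum_add_distrib, Finset.sum_sub_distrib, Finset.sum_ite_eq',
    Finset.mem_univ, if_true, Finset.sum_ite_irrel, Finset.sum_const_zero,
    Fin.sum_ite_val_lt hkm, Fin.sum_ite_val_lt (by omega : k ≤ n), nsmul_eq_mul, smul_zero,
    Nat.cast_sub hkm]
  split_ifs <;> first | omega | (push_cast; ring)

theorem mualpha_KD (hk : 0 < k) (hkm : k + m < n) {α : ℝ} (h0 : 0 ≤ α) (h1 : α < 1) :
    mualpha α (KD n k m) = perronRootKD α n k m := by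
  have : NeZero n := ⟨by omega⟩
  have hkmr : (k : ℝ) + m < n := by exact_mod_cast hkm
  refine specRad_eq_perronRoot_of_mulVec_ite (Dalpha_nonneg h0 h1.le _) (k + m)
    (mul_pos (by linarith) (by linarith)) (mul_pos (by linarith) (by positivity)) fun x y i => ?_
  have htransm := sum_ddist_KD_mul (m := m) hk hkm.le 1 1 i
  simp only [ite_self, mul_one] at htransm
  rw [Dalpha_mulVec_apply, sum_ddist_KD_mul hk hkm.le, transm, htransm]
  split_ifs <;> ring

end KD

theorem stmt14 {n k : ℕ} (hk : 1 ≤ k) (hkn : k + 3 ≤ n)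
    (α : ℝ) (h0 : 0 < α) (h1 : α < 1) :
    mualpha α (KD n k 1) < mualpha α (KD n k (n - k - 1)) := by
  rw [mualpha_KD hk (by omega) h0.le h1, mualpha_KD hk (by omega) h0.le h1,
    Nat.cast_sub (by omega), Nat.cast_sub (by omega), Nat.cast_one]
  exact perronRootKD_one_lt h0 h1 (by exact_mod_cast hk) (by exact_mod_cast hkn)
end
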